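/- arXiv:1602.04365 — 2 statements merged into one kernel-verified Lean document; each statement's English description precedes it below -/
import Mathlib

section
/- Let p_1 ≥ p_2 ≥ ... ≥ p_n > 0 be a TS instance. The makespan of the schedule produced by Greedy, namely the sum of the elements of the Greedy gap multiset G_n, is at most (3/2) · OPT(p). In other words, the approximation ratio of Greedy is at most 1.5. -/
/-- A schedule `s` is feasible for the TS instance given by sizes `p 1 ≥ … ≥ p n > 0`:
start times are nonnegative and any two distinct jobs are separated by at least
the smaller of the two sizes. -/
def Feasible (n : ℕ) (p s : ℕ → ℝ) : Prop :=
  (∀ j, 1 ≤ j → j ≤ n → 0 ≤ s j) ∧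
  ∀ i j, 1 ≤ i → i ≤ n → 1 ≤ j → j ≤ n → i ≠ j → min (p i) (p j) ≤ |s i - s j|

/-- The makespan of a schedule: `max_j (s j + p j)` over jobs `1 ≤ j ≤ n`. -/
noncomputable def makespan (n : ℕ) (p s : ℕ → ℝ) : ℝ :=
  sSup ((fun j => s j + p j) '' Set.Icc 1 n)

/-- `OPT`: the infimum of the makespan over all feasible schedules. -/
noncomputable def OPT (n : ℕ) (p : ℕ → ℝ) : ℝ :=
  sInf {T | ∃ s : ℕ → ℝ, Feasible n p s ∧ makespan n p s = T}

/-- The multiset of gaps maintained by Greedy: `G 1 = {p 1}`, and `G (j+1)` is obtained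
from `G j` by removing a maximum element `x` and inserting `p (j+1)` and
`max (p (j+1)) (x - p (j+1))`. (For positive instances `fold max 0` is the maximum.) -/
noncomputable def greedyGaps (p : ℕ → ℝ) : ℕ → Multiset ℝ
  | 0 => 0
  | 1 => {p 1}
  | (j + 2) =>
      let G := greedyGaps p (j + 1)
      let x := G.fold max 0
      p (j + 2) ::ₘ max (p (j + 2)) (x - p (j + 2)) ::ₘ G.erase x

/-!
Lower bound: list the jobs of a set `J` by start time. Consecutive jobs `a, b` start at least
`min (p a) (p b) ≥ min (p a) M + min (p b) M - M` apart, so for every threshold `M` every feasible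
schedule has makespan at least `∑ k ∈ J, (2 * min (p k) M - M)`.

Upper bound: when Greedy splits its maximum gap `x` with job `m`, the sum of the gaps is
unchanged if `2 * p m ≤ x`. Otherwise it becomes `∑ g - x + 2 * p m`. All gaps are at most `x`,
and the gap multiset is dominated by the job sizes in the sense
`∑ g, min g t ≤ ∑ k ≤ m, min (p k) t`, so the new sum is at most
`∑ k ≤ m, min (p k) x + p m - x`. This is at most `3/2` times the lower bound for
`J = {1, …, m}` and `M = p ⌈m/2⌉`.
-/

open Finset

lemma Multiset.fold_max_mem {α : Type*} [LinearOrder α] {s : Multiset α} {b : α} (hs : s ≠ 0)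
    (hb : ∀ g ∈ s, b ≤ g) : s.fold max b ∈ s := by
  induction s using Multiset.induction_on with
  | empty => exact absurd rfl hs
  | cons a t ih =>
    rw [Multiset.fold_cons_left]
    rcases eq_or_ne t 0 with rfl | ht
    · simp [max_eq_left (hb a (Multiset.mem_cons_self a 0))]
    · rcases max_choice a (t.fold max b) with hmax | hmax <;> rw [hmax]
      · exact Multiset.mem_cons_self a t
      · exact Multiset.mem_cons_of_mem (ih ht fun g hg => hb g (Multiset.mem_cons_of_mem hg))

lemma Multiset.le_fold_max {α : Type*} [LinearOrder α] {s : Multiset α} {g : α} (b : α)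
    (hg : g ∈ s) : g ≤ s.fold max b := by
  rw [← Multiset.cons_erase hg, Multiset.fold_cons_left]
  exact le_max_left _ _

lemma sum_Icc_one_eq_add_sum_Ioc {M : Type*} [AddCommMonoid M] (f : ℕ → M) {K m : ℕ}
    (hKm : K ≤ m) :
    ∑ k ∈ Icc 1 m, f k = ∑ k ∈ Icc 1 K, f k + ∑ k ∈ Ioc K m, f k :=
  (sum_Ioc_consecutive f K.zero_le hKm).symm

section LowerBound

lemma min_add_min_sub_le_min {α : Type*} [AddCommGroup α] [LinearOrder α] [IsOrderedAddMonoid α]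
    (a b M : α) : min a M + min b M - M ≤ min a b := by
  rw [sub_le_iff_le_add]
  rcases le_total a b with h | h
  · rw [min_eq_left h]; exact add_le_add (min_le_left a M) (min_le_right b M)
  · rw [min_eq_right h, add_comm (min a M)]; exact add_le_add (min_le_left b M) (min_le_right a M)

variable {n : ℕ} {p s : ℕ → ℝ}

lemma Feasible.exists_sum_two_min_sub_le (hs : Feasible n p s) (M : ℝ) {J : Finset ℕ}
    (hJ : J ⊆ Icc 1 n) (hne : J.Nonempty) :
    ∃ a ∈ J, ∑ k ∈ J, (2 * min (p k) M - M) ≤ s a + min (p a) M := by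
  induction J using Finset.induction_on_max_value s with
  | empty => exact absurd hne Finset.not_nonempty_empty
  | insert a J ha hmax ih =>
    have haJ := mem_Icc.1 (hJ (mem_insert_self a J))
    rw [sum_insert ha]
    rcases J.eq_empty_or_nonempty with rfl | hJne
    · refine ⟨a, mem_insert_self a ∅, ?_⟩
      rw [sum_empty]
      linarith [hs.1 a haJ.1 haJ.2, min_le_right (p a) M]
    obtain ⟨b, hb, hsum⟩ := ih ((subset_insert a J).trans hJ) hJne
    have hbJ := mem_Icc.1 (hJ (mem_insert_of_mem hb))
    have hab : a ≠ b := fun h => ha (h ▸ hb)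
    have hsep : min (p a) (p b) ≤ s a - s b := by
      simpa [abs_of_nonneg (sub_nonneg.2 (hmax b hb))] using
        hs.2 a b haJ.1 haJ.2 hbJ.1 hbJ.2 hab
    refine ⟨a, mem_insert_self a J, ?_⟩
    linarith [min_add_min_sub_le_min (p a) (p b) M]

lemma le_makespan {i : ℕ} (hi : i ∈ Icc 1 n) : s i + p i ≤ makespan n p s :=
  le_csSup ((Set.finite_Icc 1 n).image _).bddAbove ⟨i, by simpa using hi, rfl⟩

lemma Feasible.sum_two_min_sub_le_makespan (hs : Feasible n p s) (M : ℝ) {J : Finset ℕ}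
    (hJ : J ⊆ Icc 1 n) (hne : J.Nonempty) :
    ∑ k ∈ J, (2 * min (p k) M - M) ≤ makespan n p s := by
  obtain ⟨a, ha, hsum⟩ := hs.exists_sum_two_min_sub_le M hJ hne
  linarith [min_le_left (p a) M, le_makespan (p := p) (s := s) (hJ ha)]

lemma exists_feasible (n : ℕ) (p : ℕ → ℝ) : ∃ s, Feasible n p s := by
  set C := ∑ k ∈ Icc 1 n, |p k|
  have hC : 0 ≤ C := sum_nonneg fun k _ => abs_nonneg (p k)
  refine ⟨fun j => j * C, fun j _ _ => by positivity, fun i j hi hin hj hjn hij => ?_⟩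
  have hpi : p i ≤ C :=
    (le_abs_self _).trans (single_le_sum (fun k _ => abs_nonneg (p k)) (mem_Icc.2 ⟨hi, hin⟩))
  have hpj : p j ≤ C :=
    (le_abs_self _).trans (single_le_sum (fun k _ => abs_nonneg (p k)) (mem_Icc.2 ⟨hj, hjn⟩))
  rcases Nat.lt_or_gt_of_ne hij with h | h
  · have h' : (i : ℝ) + 1 ≤ j := by exact_mod_cast h
    rw [abs_sub_comm, abs_of_nonneg (by nlinarith)]
    nlinarith [min_le_left (p i) (p j)]
  · have h' : (j : ℝ) + 1 ≤ i := by exact_mod_cast h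
    rw [abs_of_nonneg (by nlinarith)]
    nlinarith [min_le_right (p i) (p j)]

lemma sum_two_min_sub_le_OPT (M : ℝ) {J : Finset ℕ} (hJ : J ⊆ Icc 1 n) (hne : J.Nonempty) :
    ∑ k ∈ J, (2 * min (p k) M - M) ≤ OPT n p := by
  obtain ⟨s, hs⟩ := exists_feasible n p
  refine le_csInf ⟨_, s, hs, rfl⟩ ?_
  rintro _ ⟨s, hs, rfl⟩
  exact hs.sum_two_min_sub_le_makespan M hJ hne

end LowerBound

lemma sum_min_add_sub_le_three_halves_mul {p : ℕ → ℝ} {m : ℕ} (hm : 1 ≤ m)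
    (hanti : AntitoneOn p (Set.Icc 1 m)) (hpos : 0 ≤ p m) {x : ℝ} (hx : x ≤ 2 * p m) :
    ∑ k ∈ Icc 1 m, min (p k) x + p m - x ≤
      3 / 2 * ∑ k ∈ Icc 1 m, (2 * min (p k) (p ((m + 1) / 2)) - p ((m + 1) / 2)) := by
  set K := (m + 1) / 2
  set M := p K
  have hK1 : 1 ≤ K := by omega
  have hKm : K ≤ m := by omega
  have hK : (m : ℝ) ≤ 2 * K ∧ 2 * (K : ℝ) ≤ m + 1 := by
    constructor <;> norm_cast <;> omega
  have hK1' : (1 : ℝ) ≤ K := by exact_mod_cast hK1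
  have hcard : ((Ioc K m).card : ℝ) = m - K := by rw [Nat.card_Ioc, Nat.cast_sub hKm]
  set T := ∑ k ∈ Ioc K m, p k
  have hhead : ∑ k ∈ Icc 1 K, min (p k) x ≤ K * x := by
    simpa using sum_le_card_nsmul (Icc 1 K) (fun k => min (p k) x) x fun k _ => min_le_right _ x
  have htail : ∑ k ∈ Ioc K m, min (p k) x ≤ T := sum_le_sum fun k _ => min_le_left _ x
  have hheadM : ∑ k ∈ Icc 1 K, (2 * min (p k) M - M) = K * M := by
    rw [sum_congr rfl fun k hk => (show 2 * min (p k) M - M = M by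
      have hk := mem_Icc.1 hk
      rw [min_eq_right (hanti ⟨hk.1, hk.2.trans hKm⟩ ⟨hK1, hKm⟩ hk.2)]; ring)]
    simp
  have htailM : ∑ k ∈ Ioc K m, (2 * min (p k) M - M) = 2 * T - (m - K) * M := by
    rw [sum_congr rfl fun k hk => (show 2 * min (p k) M - M = 2 * p k - M by
      have hk := mem_Ioc.1 hk
      rw [min_eq_left (hanti ⟨hK1, hKm⟩ ⟨by omega, hk.2⟩ hk.1.le)])]
    rw [sum_sub_distrib, ← mul_sum, sum_const, nsmul_eq_mul, hcard]
  have hT : (m - K) * p m ≤ T := by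
    have := card_nsmul_le_sum (Ioc K m) p (p m) fun k hk =>
      hanti ⟨by grind, (mem_Ioc.1 hk).2⟩ ⟨hm, le_rfl⟩ (mem_Ioc.1 hk).2
    rwa [nsmul_eq_mul, hcard] at this
  have hMm : p m ≤ M := hanti ⟨hK1, hKm⟩ ⟨hm, le_rfl⟩ hKm
  rw [sum_Icc_one_eq_add_sum_Ioc _ hKm, sum_Icc_one_eq_add_sum_Ioc _ hKm, hheadM, htailM]
  nlinarith [mul_nonneg (sub_nonneg.2 hK1') (sub_nonneg.2 hx),
    mul_nonneg (sub_nonneg.2 hK.1) (sub_nonneg.2 hMm),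
    mul_nonneg (show (0 : ℝ) ≤ m + 2 - 2 * K by linarith) hpos]

section Greedy

variable {p : ℕ → ℝ} {n : ℕ}

noncomputable def maxGap (p : ℕ → ℝ) (n : ℕ) : ℝ := (greedyGaps p n).fold max 0

lemma greedyGaps_succ (hn : n ≠ 0) :
    greedyGaps p (n + 1) = p (n + 1) ::ₘ max (p (n + 1)) (maxGap p n - p (n + 1)) ::ₘ
      (greedyGaps p n).erase (maxGap p n) := by
  obtain ⟨k, rfl⟩ := Nat.exists_eq_succ_of_ne_zero hn
  rfl

lemma greedyGaps_ne_zero (hn : n ≠ 0) : greedyGaps p n ≠ 0 := by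
  obtain ⟨_ | k, rfl⟩ := Nat.exists_eq_succ_of_ne_zero hn
  · simp [greedyGaps]
  · rw [greedyGaps_succ k.succ_ne_zero]
    exact Multiset.cons_ne_zero

lemma le_of_mem_greedyGaps (hn : 1 ≤ n) (hanti : AntitoneOn p (Set.Icc 1 n)) :
    ∀ g ∈ greedyGaps p n, p n ≤ g := by
  induction n, hn using Nat.le_induction with
  | base => simp [greedyGaps]
  | succ n hn ih =>
    have hstep : p (n + 1) ≤ p n := hanti ⟨hn, by omega⟩ ⟨by omega, le_rfl⟩ (by omega)
    intro g hg
    rw [greedyGaps_succ (by omega)] at hg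
    rcases Multiset.mem_cons.1 hg with rfl | hg
    · exact le_rfl
    rcases Multiset.mem_cons.1 hg with rfl | hg
    · exact le_max_left _ _
    · exact hstep.trans (ih (hanti.mono (Set.Icc_subset_Icc_right (by omega))) g
        (Multiset.mem_of_mem_erase hg))

lemma maxGap_mem (hn : 1 ≤ n) (hanti : AntitoneOn p (Set.Icc 1 n)) (hpos : 0 < p n) :
    maxGap p n ∈ greedyGaps p n :=
  Multiset.fold_max_mem (greedyGaps_ne_zero (by omega)) fun g hg =>
    hpos.le.trans (le_of_mem_greedyGaps hn hanti g hg)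

lemma le_maxGap {g : ℝ} (hg : g ∈ greedyGaps p n) : g ≤ maxGap p n :=
  Multiset.le_fold_max 0 hg

lemma sum_map_greedyGaps_succ (hn : 1 ≤ n) (hx : maxGap p n ∈ greedyGaps p n)
    (f : ℝ → ℝ) :
    ((greedyGaps p (n + 1)).map f).sum + f (maxGap p n) =
      f (p (n + 1)) + f (max (p (n + 1)) (maxGap p n - p (n + 1))) +
        ((greedyGaps p n).map f).sum := by
  conv_rhs => rw [← Multiset.cons_erase hx]
  rw [greedyGaps_succ (by omega)]
  simp only [Multiset.map_cons, Multiset.sum_cons]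
  ring

lemma sum_min_greedyGaps_le (hn : 1 ≤ n) (hanti : AntitoneOn p (Set.Icc 1 n)) (hpos : 0 < p n)
    (t : ℝ) : ((greedyGaps p n).map (min · t)).sum ≤ ∑ k ∈ Icc 1 n, min (p k) t := by
  induction n, hn using Nat.le_induction with
  | base => simp [greedyGaps]
  | succ n hn ih =>
    have hanti' := hanti.mono (Set.Icc_subset_Icc_right n.le_succ)
    have hstep : p (n + 1) ≤ p n := hanti ⟨hn, by omega⟩ ⟨by omega, le_rfl⟩ (by omega)
    have hpos' := hpos.trans_le hstep
    have hx := maxGap_mem hn hanti' hpos'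
    have hqx : p (n + 1) ≤ maxGap p n := hstep.trans (le_of_mem_greedyGaps hn hanti' _ hx)
    have hnew : min (max (p (n + 1)) (maxGap p n - p (n + 1))) t ≤ min (maxGap p n) t :=
      min_le_min_right t (max_le hqx (by linarith))
    have := sum_map_greedyGaps_succ hn hx (min · t)
    rw [sum_Icc_succ_top (by omega)]
    linarith [ih hanti' hpos']

lemma sum_greedyGaps_le (hn : 1 ≤ n) (hanti : AntitoneOn p (Set.Icc 1 n)) (hpos : 0 < p n)
    {L : ℝ} (hL : ∀ m, 1 ≤ m → m ≤ n → ∀ x ≤ 2 * p m,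
      ∑ k ∈ Icc 1 m, min (p k) x + p m - x ≤ L) :
    (greedyGaps p n).sum ≤ L := by
  induction n, hn using Nat.le_induction with
  | base => simpa [greedyGaps] using hL 1 le_rfl le_rfl (p 1) (by linarith)
  | succ n hn ih =>
    have hanti' := hanti.mono (Set.Icc_subset_Icc_right n.le_succ)
    have hstep : p (n + 1) ≤ p n := hanti ⟨hn, by omega⟩ ⟨by omega, le_rfl⟩ (by omega)
    have hpos' := hpos.trans_le hstep
    have hx := maxGap_mem hn hanti' hpos'
    have hsum := sum_map_greedyGaps_succ hn hx id
    simp only [id, Multiset.map_id'] at hsum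
    rcases le_or_gt (2 * p (n + 1)) (maxGap p n) with hfree | hpaid
    · rw [max_eq_right (by linarith)] at hsum
      linarith [ih hanti' hpos' fun m h1 h2 x => hL m h1 (h2.trans n.le_succ) x]
    · have hqx : p (n + 1) ≤ maxGap p n := hstep.trans (le_of_mem_greedyGaps hn hanti' _ hx)
      have hgaps : (greedyGaps p n).sum ≤ ∑ k ∈ Icc 1 n, min (p k) (maxGap p n) := by
        have hmin := sum_min_greedyGaps_le hn hanti' hpos' (maxGap p n)
        rwa [Multiset.map_congr rfl fun g hg => min_eq_left (le_maxGap hg),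
          Multiset.map_id'] at hmin
      have hpaidL := hL (n + 1) (by omega) le_rfl (maxGap p n) hpaid.le
      rw [sum_Icc_succ_top (by omega), min_eq_left hqx] at hpaidL
      rw [max_eq_left (by linarith)] at hsum
      linarith

end Greedy

/-- the makespan of the schedule produced by Greedy (the sum of the
elements of the final gap multiset) is at most `(3/2) · OPT p`. -/
theorem stmt5 (n : ℕ) (hn : 1 ≤ n) (p : ℕ → ℝ)
    (hsort : ∀ i j, 1 ≤ i → i ≤ j → j ≤ n → p j ≤ p i)
    (hpos : ∀ i, 1 ≤ i → i ≤ n → 0 < p i) :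
    (greedyGaps p n).sum ≤ 3 / 2 * OPT n p := by
  have hanti : AntitoneOn p (Set.Icc 1 n) := fun i hi j hj hij => hsort i j hi.1 hij hj.2
  refine sum_greedyGaps_le hn hanti (hpos n hn le_rfl) fun m hm hmn x hx => ?_
  calc ∑ k ∈ Icc 1 m, min (p k) x + p m - x
      ≤ 3 / 2 * ∑ k ∈ Icc 1 m, (2 * min (p k) (p ((m + 1) / 2)) - p ((m + 1) / 2)) :=
        sum_min_add_sub_le_three_halves_mul hm (hanti.mono (Set.Icc_subset_Icc_right hmn))
          (hpos m hm hmn).le hx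
    _ ≤ 3 / 2 * OPT n p := by
        gcongr
        exact sum_two_min_sub_le_OPT _ (Icc_subset_Icc_right hmn) (nonempty_Icc.2 hm)
end

section
/- Let ε > 0 and let p_1 ≥ p_2 ≥ ... ≥ p_n > 0 be a TS instance. Let q be the sub-instance consisting of those jobs i with p_i ≥ ε·p_1/n. Then OPT(q) ≤ OPT(p) ≤ OPT(q) + ε·p_1; in particular, since OPT(p) ≥ p_1, discarding all jobs of size less than ε·p_1/n and appending them at the end of an optimal schedule for q increases the makespan by at most a factor 1+ε. -/
/-!
The lower bounds are immediate: every job `j` ends by the makespan and starts at time `≥ 0`,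
and a feasible schedule of `p` restricts to one of the sub-instance `1, …, k` with no larger
makespan. For the upper bound, take any feasible schedule of the large jobs and run the small jobs
back to back after its makespan `M`. A small job `i` then starts at least `p i` after every job
of smaller index, so the schedule stays feasible, and it ends by `M` plus the total size of the
small jobs. Each of the at most `n` small jobs has size below `ε · p 1 / n`, so that total is at
most `ε · p 1`.
-/

open Finset

def appendSchedule (k : ℕ) (p s : ℕ → ℝ) (M : ℝ) (i : ℕ) : ℝ :=
  if i ≤ k then s i else M + ∑ j ∈ Ico (k + 1) i, p j

section

variable {m n k : ℕ} {p s : ℕ → ℝ}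

lemma le_makespan_s16 {j : ℕ} (h1 : 1 ≤ j) (hj : j ≤ m) : s j + p j ≤ makespan m p s :=
  le_csSup ((Set.finite_Icc 1 m).image _).bddAbove ⟨j, ⟨h1, hj⟩, rfl⟩

lemma makespan_le {B : ℝ} (hB : 0 ≤ B) (h : ∀ j, 1 ≤ j → j ≤ m → s j + p j ≤ B) :
    makespan m p s ≤ B :=
  Real.sSup_le (by rintro _ ⟨j, ⟨h1, hj⟩, rfl⟩; exact h j h1 hj) hB

lemma makespan_mono (hkn : k ≤ n) (h : 0 ≤ makespan n p s) :
    makespan k p s ≤ makespan n p s :=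
  makespan_le h fun _ h1 hj => le_makespan_s16 h1 (hj.trans hkn)

lemma Feasible.mono (hs : Feasible n p s) (hkn : k ≤ n) : Feasible k p s :=
  ⟨fun j h1 hj => hs.1 j h1 (hj.trans hkn),
    fun i j h1i hi h1j hj hij => hs.2 i j h1i (hi.trans hkn) h1j (hj.trans hkn) hij⟩

lemma Feasible.makespan_nonneg (hs : Feasible m p s) (hp : ∀ j, 1 ≤ j → j ≤ m → 0 ≤ p j) :
    0 ≤ makespan m p s :=
  Real.sSup_nonneg <| by
    rintro _ ⟨j, ⟨h1, hj⟩, rfl⟩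
    exact add_nonneg (hs.1 j h1 hj) (hp j h1 hj)

lemma feasible_zero : Feasible 0 p s :=
  ⟨fun _ h1 h0 => absurd (h1.trans h0) (by omega),
    fun _ _ h1 h0 => absurd (h1.trans h0) (by omega)⟩

end

section appendSchedule

variable {n k : ℕ} {p s : ℕ → ℝ} {M : ℝ}

lemma appendSchedule_of_le {i : ℕ} (hi : i ≤ k) : appendSchedule k p s M i = s i :=
  if_pos hi

lemma appendSchedule_of_lt {i : ℕ} (hi : k < i) :
    appendSchedule k p s M i = M + ∑ j ∈ Ico (k + 1) i, p j :=
  if_neg (not_le.2 hi)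

variable (hp : ∀ j, 1 ≤ j → j ≤ n → 0 ≤ p j) (hM : ∀ i, 1 ≤ i → i ≤ k → s i + p i ≤ M)
include hp hM

lemma le_appendSchedule_sub {i j : ℕ} (h1i : 1 ≤ i) (hij : i < j) (hkj : k < j) (hjn : j ≤ n) :
    p i ≤ appendSchedule k p s M j - appendSchedule k p s M i := by
  rw [appendSchedule_of_lt hkj]
  rcases le_or_gt i k with hik | hki
  · have hsum : 0 ≤ ∑ l ∈ Ico (k + 1) j, p l :=
      sum_nonneg fun l hl => by rw [mem_Ico] at hl; exact hp l (by omega) (by omega)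
    rw [appendSchedule_of_le hik]
    linarith [hM i h1i hik]
  · rw [appendSchedule_of_lt hki, ← sum_Ico_consecutive p (show k + 1 ≤ i by omega) hij.le]
    have hi : p i ≤ ∑ l ∈ Ico i j, p l :=
      single_le_sum (fun l hl => by rw [mem_Ico] at hl; exact hp l (by omega) (by omega))
        (mem_Ico.2 ⟨le_rfl, hij⟩)
    linarith

lemma feasible_appendSchedule (hs : Feasible k p s) (hM0 : 0 ≤ M) :
    Feasible n p (appendSchedule k p s M) := by
  have sep : ∀ i j, 1 ≤ i → i < j → j ≤ n →
      min (p i) (p j) ≤ |appendSchedule k p s M i - appendSchedule k p s M j| := by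
    intro i j h1i hij hjn
    rcases le_or_gt j k with hjk | hkj
    · rw [appendSchedule_of_le (hij.le.trans hjk), appendSchedule_of_le hjk]
      exact hs.2 i j h1i (hij.le.trans hjk) (h1i.trans hij.le) hjk hij.ne
    · rw [abs_sub_comm]
      exact (min_le_left _ _).trans
        ((le_appendSchedule_sub hp hM h1i hij hkj hjn).trans (le_abs_self _))
  refine ⟨fun j h1 hj => ?_, fun i j h1i hin h1j hjn hij => ?_⟩
  · rcases le_or_gt j k with hjk | hkj
    · rw [appendSchedule_of_le hjk]; exact hs.1 j h1 hjk
    · rw [appendSchedule_of_lt hkj]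
      exact add_nonneg hM0
        (sum_nonneg fun l hl => by rw [mem_Ico] at hl; exact hp l (by omega) (by omega))
  · rcases hij.lt_or_gt with h | h
    · exact sep i j h1i h hjn
    · rw [min_comm, abs_sub_comm]; exact sep j i h1j h hin

lemma makespan_appendSchedule_le (hM0 : 0 ≤ M) :
    makespan n p (appendSchedule k p s M) ≤ M + ∑ j ∈ Ioc k n, p j := by
  have hsub : ∀ j, k ≤ j → j ≤ n → ∑ l ∈ Ico (k + 1) (j + 1), p l ≤ ∑ l ∈ Ioc k n, p l := by
    intro j hkj hjn
    rw [← Ico_add_one_add_one_eq_Ioc]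
    exact sum_le_sum_of_subset_of_nonneg (Ico_subset_Ico_right (by omega))
      fun l hl _ => by rw [mem_Ico] at hl; exact hp l (by omega) (by omega)
  have hsum : 0 ≤ ∑ l ∈ Ioc k n, p l :=
    sum_nonneg fun l hl => by rw [mem_Ioc] at hl; exact hp l (by omega) hl.2
  refine makespan_le (add_nonneg hM0 hsum) fun j h1 hjn => ?_
  rcases le_or_gt j k with hjk | hkj
  · rw [appendSchedule_of_le hjk]
    linarith [hM j h1 hjk]
  · rw [appendSchedule_of_lt hkj, add_assoc, ← sum_Ico_succ_top (by omega)]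
    linarith [hsub j hkj.le hjn]

end appendSchedule

section OPT

variable {m n k : ℕ} {p : ℕ → ℝ}

lemma OPT_le_makespan (hp : ∀ j, 1 ≤ j → j ≤ m → 0 ≤ p j) {s : ℕ → ℝ} (hs : Feasible m p s) :
    OPT m p ≤ makespan m p s :=
  csInf_le ⟨0, by rintro _ ⟨s, hs, rfl⟩; exact hs.makespan_nonneg hp⟩ ⟨s, hs, rfl⟩

lemma le_OPT (hp : ∀ j, 1 ≤ j → j ≤ m → 0 ≤ p j) {B : ℝ}
    (h : ∀ s, Feasible m p s → B ≤ makespan m p s) : B ≤ OPT m p :=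
  -- witness: all jobs run back to back from time `0`
  le_csInf
    ⟨_, _, feasible_appendSchedule hp (fun _ h1 h0 => absurd (h1.trans h0) (by omega))
      (feasible_zero (s := 0)) le_rfl, rfl⟩
    (by rintro _ ⟨s, hs, rfl⟩; exact h s hs)

lemma le_OPT_of_mem (hp : ∀ j, 1 ≤ j → j ≤ m → 0 ≤ p j) {j : ℕ} (h1 : 1 ≤ j) (hj : j ≤ m) :
    p j ≤ OPT m p :=
  le_OPT hp fun s hs => by linarith [hs.1 j h1 hj, le_makespan_s16 (p := p) (s := s) h1 hj]

variable (hkn : k ≤ n) (hp : ∀ j, 1 ≤ j → j ≤ n → 0 ≤ p j)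
include hkn hp

lemma OPT_mono : OPT k p ≤ OPT n p :=
  le_OPT hp fun _ hs =>
    (OPT_le_makespan (fun j h1 hj => hp j h1 (hj.trans hkn)) (hs.mono hkn)).trans
      (makespan_mono hkn (hs.makespan_nonneg hp))

lemma OPT_le_OPT_add_sum : OPT n p ≤ OPT k p + ∑ j ∈ Ioc k n, p j := by
  have hpk : ∀ j, 1 ≤ j → j ≤ k → 0 ≤ p j := fun j h1 hj => hp j h1 (hj.trans hkn)
  rw [← sub_le_iff_le_add]
  refine le_OPT hpk fun s hs => sub_le_iff_le_add.2 ?_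
  have hM : ∀ i, 1 ≤ i → i ≤ k → s i + p i ≤ makespan k p s := fun _ h1 hi => le_makespan_s16 h1 hi
  have hM0 := hs.makespan_nonneg hpk
  calc OPT n p ≤ makespan n p (appendSchedule k p s (makespan k p s)) :=
        OPT_le_makespan hp (feasible_appendSchedule hp hM hs hM0)
    _ ≤ makespan k p s + ∑ j ∈ Ioc k n, p j := makespan_appendSchedule_le hp hM hM0

end OPT

lemma sum_Ioc_le_of_le_div {n k : ℕ} {p : ℕ → ℝ} {c : ℝ} (hc : 0 ≤ c)
    (h : ∀ j ∈ Ioc k n, p j ≤ c / n) : ∑ j ∈ Ioc k n, p j ≤ c := by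
  rcases Nat.eq_zero_or_pos n with rfl | hn
  · simpa using hc
  calc ∑ j ∈ Ioc k n, p j ≤ #(Ioc k n) • (c / n) := sum_le_card_nsmul _ _ _ h
    _ = ((n - k : ℕ) : ℝ) * (c / n) := by rw [Nat.card_Ioc, nsmul_eq_mul]
    _ ≤ n * (c / n) := by gcongr; exact Nat.sub_le n k
    _ = c := mul_div_cancel₀ c (by positivity)

theorem stmt16_general (n : ℕ) (hn : 1 ≤ n) (ε : ℝ) (hε : 0 < ε) (p : ℕ → ℝ)
    (hpos : ∀ i, 1 ≤ i → i ≤ n → 0 < p i)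
    (k : ℕ) (hkn : k ≤ n)
    (hk : ∀ i, 1 ≤ i → i ≤ n → (ε * p 1 / n ≤ p i ↔ i ≤ k)) :
    p 1 ≤ OPT n p ∧ OPT k p ≤ OPT n p ∧ OPT n p ≤ OPT k p + ε * p 1 := by
  have hp : ∀ i, 1 ≤ i → i ≤ n → 0 ≤ p i := fun i h1 hi => (hpos i h1 hi).le
  have small : ∑ j ∈ Ioc k n, p j ≤ ε * p 1 := by
    refine sum_Ioc_le_of_le_div (mul_pos hε (hpos 1 le_rfl hn)).le fun j hj => ?_
    rw [mem_Ioc] at hj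
    exact (not_le.1 fun h => by have := (hk j (by omega) hj.2).1 h; omega).le
  exact ⟨le_OPT_of_mem hp le_rfl hn, OPT_mono hkn hp,
    (OPT_le_OPT_add_sum hkn hp).trans (by linarith)⟩

/-- let `q` be the sub-instance consisting of the jobs `i` with
`p i ≥ ε · p 1 / n`; since `p` is sorted, these are the jobs `1, …, k` for some `k`, so
`q` is `p` restricted to `Icc 1 k`. Then `OPT q ≤ OPT p ≤ OPT q + ε · p 1`; in
particular (since `OPT p ≥ p 1`) discarding the small jobs and appending them at the end
increases the makespan by at most a factor `1 + ε`. -/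
theorem stmt16 (n : ℕ) (hn : 1 ≤ n) (ε : ℝ) (hε : 0 < ε) (p : ℕ → ℝ)
    (hsort : ∀ i j, 1 ≤ i → i ≤ j → j ≤ n → p j ≤ p i)
    (hpos : ∀ i, 1 ≤ i → i ≤ n → 0 < p i)
    (k : ℕ) (hkn : k ≤ n)
    (hk : ∀ i, 1 ≤ i → i ≤ n → (ε * p 1 / n ≤ p i ↔ i ≤ k)) :
    p 1 ≤ OPT n p ∧ OPT k p ≤ OPT n p ∧ OPT n p ≤ OPT k p + ε * p 1 :=
  stmt16_general n hn ε hε p hpos k hkn hk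
end
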